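/- arXiv:1508.01779 — 2 statements merged into one kernel-verified Lean document; each statement's English description precedes it below -/
import Mathlib

section
/- Let t ∈ (0, 1/4), σ and ϑ as in the cutoff construction, and let ψ be the indicator of {x : dist(x,ℤ) ≤ t}. Then for every j ≥ 0 there is a constant c_j depending only on σ and j (not on t) such that for all x ∈ ℝ, ∑_{k ∈ ℤ} |ϑ^{(j)}(x − k)| ≤ c_j · t^{−j} · (ψ(x) + 1). -/
open Topology

private lemma aux_iteratedDeriv_zero_fun (n : ℕ) :
    iteratedDeriv n (fun _ : ℝ => (0:ℝ)) = fun _ => 0 := by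
  induction n with
  | zero => simp [iteratedDeriv_zero]
  | succ n ih => rw [iteratedDeriv_succ, ih]; simp

private lemma aux_iteratedDeriv_const (n : ℕ) (hn : n ≠ 0) (c : ℝ) :
    iteratedDeriv n (fun _ : ℝ => c) = fun _ => 0 := by
  obtain ⟨m, rfl⟩ := Nat.exists_eq_succ_of_ne_zero hn
  rw [iteratedDeriv_succ']
  simp only [deriv_const']
  exact aux_iteratedDeriv_zero_fun m

/-- For every `j ≥ 0` there is a constant `c_j` depending only on `σ` and `j` (not on
`t`) such that for all `x ∈ ℝ`, `∑_{k ∈ ℤ} |ϑ^{(j)}(x-k)| ≤ c_j · t^{-j} · (ψ(x)+1)`,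
where `ϑ` is the width-`t` cutoff of `[0,1]` built from `σ` and `ψ` is the indicator
of `{x : dist(x,ℤ) ≤ t}`. -/
theorem stmt_4
    (σ : ℝ → ℝ) (hσ_smooth : ContDiff ℝ (⊤ : ℕ∞) σ) (hσ_mono : Monotone σ)
    (hσ0 : ∀ x : ℝ, x ≤ -1 → σ x = 0) (hσ1 : ∀ x : ℝ, 0 ≤ x → σ x = 1)
    (j : ℕ) :
    ∃ c : ℝ, 0 < c ∧
      ∀ t ∈ Set.Ioo (0 : ℝ) (1/4), ∀ ϑ : ℝ → ℝ,
        ((∀ x : ℝ, x ≤ -t → ϑ x = 0) ∧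
         (∀ x ∈ Set.Icc (-t) (0:ℝ), ϑ x = σ (x / t)) ∧
         (∀ x ∈ Set.Icc (0:ℝ) 1, ϑ x = 1) ∧
         (∀ x ∈ Set.Icc (1:ℝ) (1 + t), ϑ x = σ ((1 - x) / t)) ∧
         (∀ x : ℝ, 1 + t ≤ x → ϑ x = 0)) →
        ∀ ψ : ℝ → ℝ,
          ((∀ x : ℝ, (∃ a : ℤ, |x - (a : ℝ)| ≤ t) → ψ x = 1) ∧
           (∀ x : ℝ, ¬ (∃ a : ℤ, |x - (a : ℝ)| ≤ t) → ψ x = 0)) →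
          ∀ x : ℝ,
            ∑' k : ℤ, |iteratedDeriv j ϑ (x - (k : ℝ))| ≤ c * t ^ (-(j : ℤ)) * (ψ x + 1) := by
  have hσj : ContDiff ℝ j σ := hσ_smooth.of_le (by exact_mod_cast le_top)
  -- global bound on the j-th derivative of σ
  obtain ⟨z0, hz0mem, hz0⟩ := (isCompact_Icc (a := (-1:ℝ)) (b := 0)).exists_isMaxOn
    (Set.nonempty_Icc.2 (by norm_num))
    ((hσ_smooth.continuous_iteratedDeriv j (by exact_mod_cast le_top)).abs.continuousOn)
  set B := |iteratedDeriv j σ z0| with hBdef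
  have hB0 : 0 ≤ B := abs_nonneg _
  have hBbound : ∀ z : ℝ, |iteratedDeriv j σ z| ≤ B := by
    intro z
    rcases le_or_gt z 0 with hz | hz
    · rcases lt_or_ge z (-1) with hz1 | hz1
      · have heq : iteratedDeriv j σ z = iteratedDeriv j (fun _ : ℝ => (0:ℝ)) z := by
          apply Filter.EventuallyEq.iteratedDeriv_eq
          filter_upwards [Iio_mem_nhds hz1] with w hw
          exact hσ0 w hw.le
        rw [heq, aux_iteratedDeriv_zero_fun]
        simpa using hB0
      · exact hz0 ⟨hz1, hz⟩
    · have heq : iteratedDeriv j σ z = iteratedDeriv j (fun _ : ℝ => (1:ℝ)) z := by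
        apply Filter.EventuallyEq.iteratedDeriv_eq
        filter_upwards [Ioi_mem_nhds hz] with w hw
        exact hσ1 w hw.le
      rcases Nat.eq_zero_or_pos j with rfl | hj
      · rw [heq]
        have h0 : |iteratedDeriv 0 σ 0| ≤ B := hz0 ⟨by norm_num, le_refl (0:ℝ)⟩
        rw [iteratedDeriv_zero] at h0 ⊢
        rw [hσ1 0 le_rfl] at h0
        simpa using h0
      · rw [heq, aux_iteratedDeriv_const j hj.ne' 1]
        simpa using hB0
  refine ⟨2 * B + 1, by positivity, ?_⟩
  rintro t ⟨ht0, ht4⟩ ϑ ⟨h1, h2, h3, h4, h5⟩ ψ ⟨hψ1, hψ0⟩ x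
  have htj : (0:ℝ) < t ^ (-(j:ℤ)) := zpow_pos ht0 _
  have htpow : t ^ (-(j:ℤ)) = t⁻¹ ^ j := by
    rw [zpow_neg, zpow_natCast, inv_pow]
  -- ϑ agrees with σ (t⁻¹ * ·) on (-∞, 1]
  have hleft : ∀ w : ℝ, w ≤ 1 → ϑ w = σ (t⁻¹ * w) := by
    intro w hw
    rw [← div_eq_inv_mul]
    rcases le_or_gt w (-t) with h | h
    · rw [h1 w h, eq_comm]
      exact hσ0 _ (by rw [div_le_iff₀ ht0]; linarith)
    rcases le_or_gt w 0 with h' | h'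
    · exact h2 w ⟨h.le, h'⟩
    · rw [h3 w ⟨h'.le, hw⟩, eq_comm]
      exact hσ1 _ (div_nonneg h'.le ht0.le)
  -- ϑ agrees with σ (t⁻¹ * (1 - ·)) on [0, ∞)
  have hright : ∀ w : ℝ, 0 ≤ w → ϑ w = σ (t⁻¹ * (1 - w)) := by
    intro w hw
    rw [← div_eq_inv_mul]
    rcases le_or_gt w 1 with h | h
    · rw [h3 w ⟨hw, h⟩, eq_comm]
      exact hσ1 _ (div_nonneg (by linarith) ht0.le)
    rcases le_or_gt w (1 + t) with h' | h'
    · exact h4 w ⟨h.le, h'⟩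
    · rw [h5 w h'.le, eq_comm]
      exact hσ0 _ (by rw [div_le_iff₀ ht0]; linarith)
  -- the key pointwise bound
  have key : ∀ y : ℝ, |iteratedDeriv j ϑ y| ≤ B * t ^ (-(j:ℤ)) := by
    intro y
    have hcm := iteratedDeriv_comp_const_mul hσj t⁻¹
    rcases lt_or_ge y 1 with hy | hy
    · have heq : iteratedDeriv j ϑ y = iteratedDeriv j (fun z => σ (t⁻¹ * z)) y := by
        apply Filter.EventuallyEq.iteratedDeriv_eq
        filter_upwards [Iio_mem_nhds hy] with w hw
        exact hleft w hw.le
      rw [heq, hcm, htpow]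
      rw [abs_mul, abs_pow, abs_inv, abs_of_pos ht0, mul_comm]
      exact mul_le_mul_of_nonneg_right (hBbound _) (by positivity)
    · have hy0 : (0:ℝ) < y := by linarith
      have heq : iteratedDeriv j ϑ y = iteratedDeriv j (fun z => σ (t⁻¹ * (1 - z))) y := by
        apply Filter.EventuallyEq.iteratedDeriv_eq
        filter_upwards [Ioi_mem_nhds hy0] with w hw
        exact hright w hw.le
      have hfun : (fun z => σ (t⁻¹ * (1 - z))) =
          fun z => (fun u => σ (t⁻¹ * (1 + u))) (-z) := by
        funext z; ring_nf
      have hadd := iteratedDeriv_comp_const_add j (fun w => σ (t⁻¹ * w)) 1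
      have hneg := iteratedDeriv_comp_neg j (fun u => σ (t⁻¹ * (1 + u))) y
      rw [heq, hfun, hneg]
      have : iteratedDeriv j (fun u => σ (t⁻¹ * (1 + u))) (-y)
          = iteratedDeriv j (fun w => σ (t⁻¹ * w)) (1 + -y) := by
        have := congrFun hadd (-y)
        simpa using this
      rw [this, hcm, htpow]
      rw [smul_eq_mul, abs_mul, abs_pow, abs_neg, abs_one, one_pow, one_mul,
        abs_mul, abs_pow, abs_inv, abs_of_pos ht0, mul_comm]
      exact mul_le_mul_of_nonneg_right (hBbound _) (by positivity)
  -- support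
  have supp : ∀ y : ℝ, y < -t ∨ 1 + t < y → iteratedDeriv j ϑ y = 0 := by
    intro y hy
    have heq : iteratedDeriv j ϑ y = iteratedDeriv j (fun _ : ℝ => (0:ℝ)) y := by
      apply Filter.EventuallyEq.iteratedDeriv_eq
      rcases hy with hy | hy
      · filter_upwards [Iio_mem_nhds hy] with w hw
        exact h1 w hw.le
      · filter_upwards [Ioi_mem_nhds hy] with w hw
        exact h5 w hw.le
    rw [heq, aux_iteratedDeriv_zero_fun]
  set m : ℤ := ⌊x + t⌋ with hm
  have hsum : ∑' k : ℤ, |iteratedDeriv j ϑ (x - (k:ℝ))|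
      = ∑ k ∈ ({m - 1, m} : Finset ℤ), |iteratedDeriv j ϑ (x - (k:ℝ))| := by
    apply tsum_eq_sum
    intro k hk
    simp only [Finset.mem_insert, Finset.mem_singleton] at hk
    push_neg at hk
    have hcase : x - (k:ℝ) < -t ∨ 1 + t < x - (k:ℝ) := by
      by_contra h
      push_neg at h
      obtain ⟨hA, hB'⟩ := h
      -- -t ≤ x - k  and  x - k ≤ 1 + t
      have hk1 : k ≤ m := Int.le_floor.2 (by linarith)
      have hmle : (m:ℝ) ≤ x + t := Int.floor_le _
      have hk2 : (m:ℝ) - 2 < (k:ℝ) := by linarith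
      have hk2' : m - 2 < k := by exact_mod_cast hk2
      omega
    rw [supp _ hcase, abs_zero]
  have hψx : (1:ℝ) ≤ ψ x + 1 := by
    by_cases h : ∃ a : ℤ, |x - (a:ℝ)| ≤ t
    · rw [hψ1 x h]; norm_num
    · rw [hψ0 x h]; norm_num
  have hne : m - 1 ≠ m := by omega
  rw [hsum, Finset.sum_pair hne]
  have b1 := key (x - ((m - 1 : ℤ) : ℝ))
  have b2 := key (x - (m : ℝ))
  calc |iteratedDeriv j ϑ (x - ((m - 1 : ℤ):ℝ))| + |iteratedDeriv j ϑ (x - (m:ℝ))|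
      ≤ B * t ^ (-(j:ℤ)) + B * t ^ (-(j:ℤ)) := add_le_add b1 b2
    _ ≤ (2 * B + 1) * t ^ (-(j:ℤ)) * 1 := by nlinarith [htj]
    _ ≤ (2 * B + 1) * t ^ (-(j:ℤ)) * (ψ x + 1) :=
        mul_le_mul_of_nonneg_left hψx (by positivity)
end

section
/- Let t ∈ (0,1/4), ψ the indicator of {x : dist(x,ℤ) ≤ t}, and fix a positive integer k, reals c_1', c_2' with 0 < c_1' ≤ c_2', a point x ∈ ℝ^n, and δ > 0. Define Ψ_{[b]}(x) = ∑_p ∏_{i=1}^n (ψ((x_i − b_i)/p) + 1), where p ranges over powers of 2 with c_1' δ n^{−1/2} ≤ p ≤ c_2' δ n^{−1/2}. Then the average of Ψ_{[b]}(x)^k over b in a fundamental period satisfies ⟨Ψ_{[b]}(x)^k⟩ ≤ C(k, c_1', c_2') · (1 + t·2^{k+1})^n, with C independent of n, t, x, δ. -/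
open MeasureTheory
open scoped Classical

/-- `Ψ_{[b]}(x) = ∑_p ∏_{i=1}^n (ψ((xᵢ-bᵢ)/p) + 1)`, where `p` ranges over powers of
`2` with `c₁ δ n^{-1/2} ≤ p ≤ c₂ δ n^{-1/2}`. -/
noncomputable def PsiB {n : ℕ} (ψ : ℝ → ℝ) (c₁ c₂ δ : ℝ) (x b : Fin n → ℝ) : ℝ :=
  ∑' j : ℤ,
    if c₁ * δ / Real.sqrt n ≤ (2:ℝ) ^ j ∧ (2:ℝ) ^ j ≤ c₂ * δ / Real.sqrt n then
      ∏ i, (ψ ((x i - b i) / (2:ℝ) ^ j) + 1)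
    else 0

noncomputable def Hfun (t : ℝ) (k : ℕ) : ℝ → ℝ :=
  fun u => if ∃ a : ℤ, |u - (a:ℝ)| ≤ t then (2:ℝ)^k else 1

lemma Hfun_meas (t : ℝ) (k : ℕ) : Measurable (Hfun t k) := by
  apply Measurable.ite _ measurable_const measurable_const
  have h : {u : ℝ | ∃ a : ℤ, |u - (a:ℝ)| ≤ t} = ⋃ a : ℤ, {u : ℝ | |u - (a:ℝ)| ≤ t} := by
    ext u; simp [Set.mem_iUnion]
  rw [h]
  exact MeasurableSet.iUnion fun a =>
    measurableSet_le ((measurable_id.sub_const _).abs) measurable_const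

lemma Hfun_nonneg (t : ℝ) (k : ℕ) (u : ℝ) : 0 ≤ Hfun t k u := by
  unfold Hfun; split <;> positivity

lemma Hfun_le (t : ℝ) (k : ℕ) (u : ℝ) : Hfun t k u ≤ 2 ^ k := by
  unfold Hfun; split
  · exact le_refl _
  · exact one_le_pow₀ one_le_two

lemma Hfun_per (t : ℝ) (k : ℕ) : Function.Periodic (Hfun t k) 1 := by
  intro u
  unfold Hfun
  congr 1
  apply propext
  constructor
  · rintro ⟨a, ha⟩
    exact ⟨a - 1, by push_cast; rw [show u - ((a:ℝ) - 1) = u + 1 - a by ring]; exact ha⟩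
  · rintro ⟨a, ha⟩
    exact ⟨a + 1, by push_cast; rw [show u + 1 - ((a:ℝ) + 1) = u - a by ring]; exact ha⟩

lemma Hfun_intInt (t : ℝ) (ht0 : 0 < t) (k : ℕ) (x₀ p : ℝ) (hp : p ≠ 0) :
    ∀ a b : ℝ, IntervalIntegrable (fun y => Hfun t k ((x₀ - y) / p)) volume a b := by
  intro a b
  rw [intervalIntegrable_iff]
  apply Measure.integrableOn_of_bounded (M := 2 ^ k)
  · exact measure_Ioc_lt_top.ne
  · exact ((Hfun_meas t k).comp ((measurable_const.sub measurable_id).div_const p)).aestronglyMeasurable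
  · filter_upwards with u
    rw [Real.norm_eq_abs, abs_of_nonneg (Hfun_nonneg _ _ _)]
    exact Hfun_le _ _ _

lemma Hfun_unit_int (t : ℝ) (ht0 : 0 < t) (ht : t < 1/4) (k : ℕ) :
    ∫ u in (0:ℝ)..1, Hfun t k u ≤ 1 + t * 2 ^ (k + 1) := by
  have hint : ∀ a b : ℝ, IntervalIntegrable (Hfun t k) volume a b := by
    intro a b
    rw [intervalIntegrable_iff]
    apply Measure.integrableOn_of_bounded (M := 2 ^ k)
    · exact measure_Ioc_lt_top.ne
    · exact (Hfun_meas t k).aestronglyMeasurable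
    · filter_upwards with u
      rw [Real.norm_eq_abs, abs_of_nonneg (Hfun_nonneg _ _ _)]
      exact Hfun_le _ _ _
  have h1 : (∫ u in (0:ℝ)..1, Hfun t k u)
      = (∫ u in (0:ℝ)..t, Hfun t k u) + ((∫ u in t..(1-t), Hfun t k u)
        + ∫ u in (1-t)..1, Hfun t k u) := by
    rw [intervalIntegral.integral_add_adjacent_intervals (hint t (1-t)) (hint (1-t) 1),
      intervalIntegral.integral_add_adjacent_intervals (hint 0 t) (hint t 1)]
  have hb1 : (∫ u in (0:ℝ)..t, Hfun t k u) ≤ t * 2 ^ k := by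
    have := intervalIntegral.integral_mono_on (le_of_lt ht0) (hint 0 t)
      (intervalIntegrable_const (c := (2:ℝ)^k)) (fun u _ => Hfun_le t k u)
    simpa using this
  have hb3 : (∫ u in (1-t)..1, Hfun t k u) ≤ t * 2 ^ k := by
    have := intervalIntegral.integral_mono_on (by linarith : (1:ℝ) - t ≤ 1) (hint (1-t) 1)
      (intervalIntegrable_const (c := (2:ℝ)^k)) (fun u _ => Hfun_le t k u)
    have h2 : (1 - (1 - t)) • (2:ℝ)^k = t * 2^k := by rw [smul_eq_mul]; ring
    rw [intervalIntegral.integral_const] at this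
    rw [h2] at this
    simpa using this
  have hb2 : (∫ u in t..(1-t), Hfun t k u) ≤ 1 - 2*t := by
    rw [intervalIntegral.integral_of_le (by linarith), integral_Ioc_eq_integral_Ioo]
    have hH1 : ∀ u ∈ Set.Ioo t (1-t), Hfun t k u ≤ 1 := by
      intro u hu
      unfold Hfun
      split
      · rename_i hex
        obtain ⟨a, ha⟩ := hex
        rcases abs_le.mp ha with ⟨ha1, ha2⟩
        exfalso
        have h0a : (0:ℝ) < (a:ℝ) := by linarith [hu.1]
        have h1a : (a:ℝ) < 1 := by linarith [hu.2]
        have : (1:ℤ) ≤ a := by exact_mod_cast Int.cast_pos.mp h0a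
        have : (1:ℝ) ≤ (a:ℝ) := by exact_mod_cast this
        linarith
      · exact le_refl 1
    calc (∫ u in Set.Ioo t (1-t), Hfun t k u)
        ≤ ∫ _u in Set.Ioo t (1-t), (1:ℝ) := by
          apply setIntegral_mono_on _ _ measurableSet_Ioo hH1
          · exact ((hint t (1-t)).1.mono_set Set.Ioo_subset_Ioc_self)
          · exact integrableOn_const measure_Ioo_lt_top.ne
      _ = 1 - 2*t := by
          rw [setIntegral_const, Real.volume_real_Ioo_of_le (by linarith), smul_eq_mul, mul_one]
          ring
  have h2 : 1 + t * 2 ^ (k+1) = 1 + 2*(t * 2^k) := by ring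
  linarith [h1, hb1, hb2, hb3]

lemma onedim (t : ℝ) (ht0 : 0 < t) (ht : t < 1/4) (k : ℕ) (x₀ p τ : ℝ) (hp : 0 < p)
    (M : ℕ) (hM : τ = (M:ℝ) * p) :
    ∫ y in Set.Icc (0:ℝ) τ, Hfun t k ((x₀ - y) / p) ≤ τ * (1 + t * 2 ^ (k + 1)) := by
  have hτ : 0 ≤ τ := by rw [hM]; positivity
  have hgper : Function.Periodic (fun y => Hfun t k ((x₀ - y) / p)) p := by
    intro y
    simp only
    rw [show (x₀ - (y + p)) / p = (x₀ - y) / p - 1 by field_simp; ring,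
      (Hfun_per t k).sub_eq]
  have hgint := Hfun_intInt t ht0 k x₀ p hp.ne'
  -- reduce to one period
  have key : (∫ y in Set.Icc (0:ℝ) τ, Hfun t k ((x₀ - y) / p))
      = (M:ℝ) * ∫ y in (0:ℝ)..p, Hfun t k ((x₀ - y) / p) := by
    rw [integral_Icc_eq_integral_Ioc, ← intervalIntegral.integral_of_le hτ]
    have h2 := hgper.intervalIntegral_add_zsmul_eq (M:ℤ) 0 hgint
    rw [zero_add, zero_add] at h2
    rw [show ((M:ℤ) • p) = τ by rw [zsmul_eq_mul]; push_cast; linarith] at h2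
    rw [h2, zsmul_eq_mul]
    push_cast
    ring
  -- compute the one-period integral via substitution
  have sub1 : (∫ y in (0:ℝ)..p, Hfun t k ((x₀ - y) / p))
      = p * ∫ u in (0:ℝ)..1, Hfun t k u := by
    have e1 := intervalIntegral.integral_comp_sub_left (a := (0:ℝ)) (b := p)
      (fun z => Hfun t k (z / p)) x₀
    rw [e1, sub_zero]
    have e2 := intervalIntegral.integral_comp_div (a := x₀ - p) (b := x₀)
      (c := p) (Hfun t k) hp.ne'
    rw [e2, smul_eq_mul]
    congr 1
    rw [show (x₀ - p) / p = x₀ / p - 1 by rw [sub_div, div_self hp.ne']]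
    have e3 := (Hfun_per t k).intervalIntegral_add_eq (x₀ / p - 1) 0
    rw [sub_add_cancel, zero_add] at e3
    exact e3
  rw [key, sub1, hM]
  have hI := Hfun_unit_int t ht0 ht k
  have hInn : 0 ≤ ∫ u in (0:ℝ)..1, Hfun t k u := by
    apply intervalIntegral.integral_nonneg zero_le_one
    intro u _
    exact Hfun_nonneg t k u
  have hMp : (0:ℝ) ≤ (M:ℝ) := Nat.cast_nonneg M
  calc (M:ℝ) * (p * ∫ u in (0:ℝ)..1, Hfun t k u)
      ≤ (M:ℝ) * (p * (1 + t * 2 ^ (k + 1))) := by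
        apply mul_le_mul_of_nonneg_left _ hMp
        exact mul_le_mul_of_nonneg_left hI hp.le
    _ = (M:ℝ) * p * (1 + t * 2 ^ (k + 1)) := by ring

lemma box_indicator_prod {n : ℕ} (τ : ℝ) (f : Fin n → ℝ → ℝ) :
    (Set.univ.pi fun _ : Fin n => Set.Icc (0:ℝ) τ).indicator
        (fun b => ∏ i, f i (b i))
      = fun b => ∏ i, (Set.Icc (0:ℝ) τ).indicator (f i) (b i) := by
  funext b
  by_cases hb : b ∈ Set.univ.pi fun _ : Fin n => Set.Icc (0:ℝ) τ
  · rw [Set.indicator_of_mem hb]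
    exact Finset.prod_congr rfl fun i _ =>
      (Set.indicator_of_mem (hb i (Set.mem_univ i)) _).symm
  · rw [Set.indicator_of_notMem hb]
    rw [Set.mem_univ_pi] at hb
    push_neg at hb
    obtain ⟨i, hi⟩ := hb
    exact (Finset.prod_eq_zero (Finset.mem_univ i)
      (Set.indicator_of_notMem hi _)).symm

lemma box_eq {n : ℕ} (τ : ℝ) (f : Fin n → ℝ → ℝ) :
    (∫ b in Set.univ.pi (fun _ : Fin n => Set.Icc (0:ℝ) τ), ∏ i, f i (b i))
      = ∏ i, ∫ y in Set.Icc (0:ℝ) τ, f i y := by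
  have hbox : MeasurableSet (Set.univ.pi fun _ : Fin n => Set.Icc (0:ℝ) τ) :=
    MeasurableSet.univ_pi fun _ => measurableSet_Icc
  rw [← integral_indicator hbox, box_indicator_prod τ f]
  refine (MeasureTheory.integral_fintype_prod_eq_prod (μ := fun _ => volume)
      (fun i => (Set.Icc (0:ℝ) τ).indicator (f i))).trans ?_
  exact Finset.prod_congr rfl fun i _ => integral_indicator measurableSet_Icc

lemma box_integrable {n : ℕ} (τ : ℝ) (f : Fin n → ℝ → ℝ)
    (hm : ∀ i, Measurable (f i)) (c : ℝ) (hbd : ∀ i y, ‖f i y‖ ≤ c) :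
    IntegrableOn (fun b => ∏ i, f i (b i))
      (Set.univ.pi fun _ : Fin n => Set.Icc (0:ℝ) τ) := by
  have hbox : MeasurableSet (Set.univ.pi fun _ : Fin n => Set.Icc (0:ℝ) τ) :=
    MeasurableSet.univ_pi fun _ => measurableSet_Icc
  rw [← integrable_indicator_iff hbox, box_indicator_prod τ f]
  apply Integrable.fintype_prod_dep
  intro i
  rw [integrable_indicator_iff measurableSet_Icc]
  apply Measure.integrableOn_of_bounded (M := c) measure_Icc_lt_top.ne
    (hm i).aestronglyMeasurable
  filter_upwards with y using hbd i y

lemma logb_two_zpow (j : ℤ) : Real.logb 2 ((2:ℝ) ^ j) = j := by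
  have h2 : Real.log 2 ≠ 0 := (Real.log_pos one_lt_two).ne'
  rw [Real.logb, Real.log_zpow, mul_div_assoc, div_self h2, mul_one]


/-- The average of `Ψ_{[b]}(x)^k` over a fundamental period `[0,τ]ⁿ` (for any power
of `2` `τ ≥ c₂ δ n^{-1/2}`) is at most `C(k,c₁,c₂) (1 + t·2^{k+1})^n`, with `C`
independent of `n, t, x, δ`. -/
theorem stmt_13 (k : ℕ) (hk : 0 < k) (c₁ c₂ : ℝ) (hc₁ : 0 < c₁) (hc₁₂ : c₁ ≤ c₂) :
    ∃ C : ℝ, 0 < C ∧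
      ∀ n : ℕ, 0 < n → ∀ t ∈ Set.Ioo (0 : ℝ) (1/4),
      ∀ ψ : ℝ → ℝ,
        ((∀ y : ℝ, (∃ a : ℤ, |y - (a : ℝ)| ≤ t) → ψ y = 1) ∧
         (∀ y : ℝ, ¬ (∃ a : ℤ, |y - (a : ℝ)| ≤ t) → ψ y = 0)) →
      ∀ x : Fin n → ℝ, ∀ δ : ℝ, 0 < δ →
      ∀ τ : ℝ, (∃ j₀ : ℤ, τ = (2:ℝ) ^ j₀) → c₂ * δ / Real.sqrt n ≤ τ →
        (τ ^ n)⁻¹ *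
            ∫ b in Set.univ.pi (fun _ : Fin n => Set.Icc (0:ℝ) τ),
              (PsiB ψ c₁ c₂ δ x b) ^ k
          ≤ C * (1 + t * 2 ^ (k+1)) ^ n := by
  classical
  set N : ℕ := ⌈Real.logb 2 (c₂ / c₁)⌉₊ + 1 with hN
  refine ⟨(N:ℝ)^k, by positivity, ?_⟩
  intro n hn t ht ψ hψ x δ hδ τ hτpow hτB
  obtain ⟨ht0, ht4⟩ := ht
  obtain ⟨j₀, hτ⟩ := hτpow
  have hτpos : 0 < τ := by rw [hτ]; positivity
  have hsn : 0 < Real.sqrt n := Real.sqrt_pos.mpr (by exact_mod_cast hn)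
  have hApos : 0 < c₁ * δ / Real.sqrt n := by positivity
  set S : Finset ℤ := (Finset.Icc ⌈Real.logb 2 (c₁ * δ / Real.sqrt n)⌉
      ⌊Real.logb 2 (c₂ * δ / Real.sqrt n)⌋).filter
      (fun j => c₁ * δ / Real.sqrt n ≤ (2:ℝ)^j ∧ (2:ℝ)^j ≤ c₂ * δ / Real.sqrt n) with hS
  have hmemS : ∀ j : ℤ, (c₁ * δ / Real.sqrt n ≤ (2:ℝ)^j ∧
      (2:ℝ)^j ≤ c₂ * δ / Real.sqrt n) → j ∈ S := by
    rintro j ⟨h1, h2⟩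
    have hj2 : (0:ℝ) < 2^j := by positivity
    rw [hS, Finset.mem_filter, Finset.mem_Icc]
    refine ⟨⟨?_, ?_⟩, h1, h2⟩
    · rw [Int.ceil_le]
      calc Real.logb 2 (c₁ * δ / Real.sqrt n)
          ≤ Real.logb 2 ((2:ℝ)^j) := Real.logb_le_logb_of_le one_lt_two hApos h1
        _ = j := logb_two_zpow j
    · rw [Int.le_floor]
      calc ((j:ℤ):ℝ) = Real.logb 2 ((2:ℝ)^j) := (logb_two_zpow j).symm
        _ ≤ Real.logb 2 (c₂ * δ / Real.sqrt n) := Real.logb_le_logb_of_le one_lt_two hj2 h2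
  have hScard : (S.card : ℝ) ≤ (N:ℝ) := by
    have h1 : S.card ≤ (Finset.Icc ⌈Real.logb 2 (c₁ * δ / Real.sqrt n)⌉
        ⌊Real.logb 2 (c₂ * δ / Real.sqrt n)⌋).card := by
      rw [hS]; exact Finset.card_filter_le _ _
    rw [Int.card_Icc] at h1
    set D : ℤ := ⌊Real.logb 2 (c₂ * δ / Real.sqrt n)⌋ + 1
        - ⌈Real.logb 2 (c₁ * δ / Real.sqrt n)⌉ with hD
    have h2 : ((D.toNat : ℕ) : ℝ) ≤ (N:ℝ) := by
      rcases le_or_gt D 0 with h | h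
      · rw [Int.toNat_of_nonpos h]
        norm_num
      · have hfl : (⌊Real.logb 2 (c₂ * δ / Real.sqrt n)⌋ : ℝ)
            ≤ Real.logb 2 (c₂ * δ / Real.sqrt n) := Int.floor_le _
        have hcl : Real.logb 2 (c₁ * δ / Real.sqrt n)
            ≤ (⌈Real.logb 2 (c₁ * δ / Real.sqrt n)⌉ : ℝ) := Int.le_ceil _
        have hc₂ : 0 < c₂ := lt_of_lt_of_le hc₁ hc₁₂
        have hBA : Real.logb 2 (c₂ * δ / Real.sqrt n)
            - Real.logb 2 (c₁ * δ / Real.sqrt n) = Real.logb 2 (c₂ / c₁) := by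
          rw [← Real.logb_div (ne_of_gt (div_pos (mul_pos hc₂ hδ) hsn)) (ne_of_gt hApos)]
          congr 1
          field_simp
        have hup : Real.logb 2 (c₂/c₁) ≤ (⌈Real.logb 2 (c₂/c₁)⌉₊ : ℝ) :=
          Nat.le_ceil _
        have hNc : (N:ℝ) = (⌈Real.logb 2 (c₂/c₁)⌉₊ : ℝ) + 1 := by rw [hN]; push_cast; ring
        have hcast : ((D.toNat : ℕ) : ℝ) = ((D : ℤ) : ℝ) := by
          exact_mod_cast congrArg (fun z : ℤ => (z:ℝ)) (Int.toNat_of_nonneg h.le)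
        rw [hcast, hD]
        push_cast
        linarith
    calc (S.card : ℝ) ≤ _ := Nat.cast_le.mpr h1
      _ ≤ (N:ℝ) := h2
  have hψH : ∀ u : ℝ, (ψ u + 1) ^ k = Hfun t k u := by
    intro u
    unfold Hfun
    by_cases h : ∃ a : ℤ, |u - (a:ℝ)| ≤ t
    · rw [hψ.1 u h, if_pos h]; norm_num
    · rw [hψ.2 u h, if_neg h]; norm_num
  have hψnn : ∀ u : ℝ, 0 ≤ ψ u + 1 := by
    intro u
    by_cases h : ∃ a : ℤ, |u - (a:ℝ)| ≤ t
    · rw [hψ.1 u h]; norm_num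
    · rw [hψ.2 u h]; norm_num
  set F : ℤ → (Fin n → ℝ) → ℝ :=
    fun j b => ∏ i, (ψ ((x i - b i) / (2:ℝ)^j) + 1) with hF
  have hPsi : ∀ b, PsiB ψ c₁ c₂ δ x b = ∑ j ∈ S, F j b := by
    intro b
    unfold PsiB
    rw [tsum_eq_sum (s := S) ?_]
    · exact Finset.sum_congr rfl fun j hj => if_pos (Finset.mem_filter.mp hj).2
    · intro j hj
      rw [if_neg]
      intro hcond
      exact hj (hmemS j hcond)
  have hFnn : ∀ j b, 0 ≤ F j b := fun j b => Finset.prod_nonneg fun i _ => hψnn _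
  have hFk : ∀ (j : ℤ) (b : Fin n → ℝ),
      (F j b)^k = ∏ i, Hfun t k ((x i - b i)/(2:ℝ)^j) := by
    intro j b
    rw [hF]
    simp only
    rw [← Finset.prod_pow]
    exact Finset.prod_congr rfl fun i _ => hψH _
  set box : Set (Fin n → ℝ) := Set.univ.pi (fun _ : Fin n => Set.Icc (0:ℝ) τ) with hbox
  have hIntF : ∀ j : ℤ, IntegrableOn (fun b => (F j b)^k) box := by
    intro j
    have hp2 : ((2:ℝ)^j) ≠ 0 := by positivity
    have heq : (fun b => (F j b)^k)
        = fun b => ∏ i, Hfun t k ((x i - b i)/(2:ℝ)^j) := funext fun b => hFk j b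
    rw [heq, hbox]
    exact box_integrable τ (fun i y => Hfun t k ((x i - y)/(2:ℝ)^j))
      (fun i => (Hfun_meas t k).comp ((measurable_const.sub measurable_id).div_const _))
      (2^k)
      (fun i y => by
        rw [Real.norm_eq_abs, abs_of_nonneg (Hfun_nonneg _ _ _)]
        exact Hfun_le _ _ _)
  have hpoint : ∀ b, (PsiB ψ c₁ c₂ δ x b)^k
      ≤ (S.card:ℝ)^(k-1) * ∑ j ∈ S, (F j b)^k := by
    intro b
    rw [hPsi b]
    rcases Finset.eq_empty_or_nonempty S with hSe | hSne
    · rw [hSe]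
      simp [zero_pow hk.ne']
    · have hcard : (0:ℝ) < S.card := by
        exact_mod_cast Finset.card_pos.mpr hSne
      have hch := pow_sum_div_card_le_sum_pow (s := S) (f := fun j => F j b)
        (fun j _ => hFnn j b) (k-1)
      rw [Nat.sub_add_cancel hk] at hch
      rw [div_le_iff₀ (by positivity)] at hch
      calc (∑ j ∈ S, F j b)^k ≤ (∑ j ∈ S, (F j b)^k) * (S.card:ℝ)^(k-1) := hch
        _ = (S.card:ℝ)^(k-1) * ∑ j ∈ S, (F j b)^k := mul_comm _ _
  have hmono : (∫ b in box, (PsiB ψ c₁ c₂ δ x b)^k)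
      ≤ ∫ b in box, (S.card:ℝ)^(k-1) * ∑ j ∈ S, (F j b)^k := by
    apply integral_mono_of_nonneg
    · filter_upwards with b
      rw [hPsi b]
      exact pow_nonneg (Finset.sum_nonneg fun j _ => hFnn j b) k
    · exact (integrable_finset_sum S (fun j _ => hIntF j)).const_mul _
    · filter_upwards with b using hpoint b
  have hjbound : ∀ j ∈ S, (∫ b in box, (F j b)^k) ≤ (τ * (1 + t*2^(k+1)))^n := by
    intro j hj
    obtain ⟨hjIcc, hj1, hj2⟩ := Finset.mem_filter.mp hj
    have hp : (0:ℝ) < 2^j := by positivity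
    have hjle : j ≤ j₀ := by
      have h2 : (2:ℝ)^j ≤ (2:ℝ)^j₀ := le_trans hj2 (hτ ▸ hτB)
      exact (zpow_le_zpow_iff_right₀ one_lt_two).mp h2
    have hMp : τ = ((2 ^ (j₀ - j).toNat : ℕ):ℝ) * 2^j := by
      rw [hτ]
      push_cast
      rw [← zpow_natCast (2:ℝ) (j₀ - j).toNat, Int.toNat_of_nonneg (by omega), ← zpow_add₀ (two_ne_zero)]
      congr 1
      omega
    have heq : (fun b => (F j b)^k)
        = fun b => ∏ i, Hfun t k ((x i - b i)/(2:ℝ)^j) := funext fun b => hFk j b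
    rw [heq, hbox, box_eq τ (fun i y => Hfun t k ((x i - y)/(2:ℝ)^j))]
    calc (∏ i : Fin n, ∫ y in Set.Icc (0:ℝ) τ, Hfun t k ((x i - y)/(2:ℝ)^j))
        ≤ ∏ _i : Fin n, (τ * (1 + t*2^(k+1))) := by
          apply Finset.prod_le_prod
          · intro i _
            exact setIntegral_nonneg measurableSet_Icc (fun y _ => Hfun_nonneg _ _ _)
          · intro i _
            exact onedim t ht0 ht4 k (x i) ((2:ℝ)^j) τ hp _ hMp
      _ = (τ * (1 + t*2^(k+1)))^n := by
          rw [Finset.prod_const, Finset.card_univ, Fintype.card_fin]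
  have hbnn : (0:ℝ) ≤ τ * (1 + t*2^(k+1)) := by positivity
  have hfinal : (∫ b in box, (PsiB ψ c₁ c₂ δ x b)^k)
      ≤ (N:ℝ)^k * (τ * (1 + t*2^(k+1)))^n := by
    calc (∫ b in box, (PsiB ψ c₁ c₂ δ x b)^k)
        ≤ ∫ b in box, (S.card:ℝ)^(k-1) * ∑ j ∈ S, (F j b)^k := hmono
      _ = (S.card:ℝ)^(k-1) * ∑ j ∈ S, ∫ b in box, (F j b)^k := by
          rw [MeasureTheory.integral_const_mul, integral_finset_sum S (fun j _ => hIntF j)]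
      _ ≤ (S.card:ℝ)^(k-1) * (S.card • (τ * (1 + t*2^(k+1)))^n) := by
          apply mul_le_mul_of_nonneg_left _ (by positivity)
          exact Finset.sum_le_card_nsmul S _ _ (fun j hj => hjbound j hj)
      _ = (S.card:ℝ)^k * (τ * (1 + t*2^(k+1)))^n := by
          have hpow : (S.card:ℝ)^(k-1) * (S.card:ℝ) = (S.card:ℝ)^k := by
            rw [← pow_succ]
            congr 1
            omega
          rw [nsmul_eq_mul, ← hpow]
          ring
      _ ≤ (N:ℝ)^k * (τ * (1 + t*2^(k+1)))^n := by
          apply mul_le_mul_of_nonneg_right _ (by positivity)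
          exact pow_le_pow_left₀ (by positivity) hScard k
  calc (τ ^ n)⁻¹ * ∫ b in box, (PsiB ψ c₁ c₂ δ x b)^k
      ≤ (τ ^ n)⁻¹ * ((N:ℝ)^k * (τ * (1 + t*2^(k+1)))^n) := by
        apply mul_le_mul_of_nonneg_left hfinal (by positivity)
    _ = (N:ℝ)^k * (1 + t*2^(k+1))^n := by
        rw [mul_pow]
        field_simp
end
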